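/- A connected graph G with at least one edge is bipartite if and only if β₀(G) = 2/3, where β₀(G) = max{α ∈ (0,1) : λ_n(B_α(G)) = 0}. -/

import Mathlib

/-!
Write `Q = D + A` for the signless Laplacian; then `B_α = (α/2) Q + ((2 - 3α)/2) L`.
For `0 < α < 2/3` both coefficients are positive, so `B_α` is positive semidefinite with kernel
`ker Q ∩ ker L`, which is trivial for a connected graph with an edge (`L x = 0` makes `x`
constant, `Q x = 0` makes it alternate in sign along an edge), so `λ_n(B_α) > 0` there. Also
`λ_n(B_{2/3}) = λ_n(Q)/3 = 0` iff `Q` has a kernel vector, i.e. a vector alternating in sign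
along every edge, i.e. a 2-colouring. If `G` is bipartite and `α > 2/3`, such a vector `x`
lies outside `ker L`, so `xᵀ B_α x = ((2 - 3α)/2) xᵀ L x < 0`; thus `β₀(G) = 2/3` exactly.
-/

open Matrix

/-- The adjacency matrix of `G` over `ℝ`. -/
noncomputable def adjM {V : Type*} [Fintype V] [DecidableEq V]
    (G : SimpleGraph V) [DecidableRel G.Adj] : Matrix V V ℝ :=
  G.adjMatrix ℝ

/-- The diagonal degree matrix of `G`. -/
noncomputable def degM {V : Type*} [Fintype V] [DecidableEq V]
    (G : SimpleGraph V) [DecidableRel G.Adj] : Matrix V V ℝ :=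
  Matrix.diagonal fun v => (G.degree v : ℝ)

/-- The Laplacian matrix `L(G) = D(G) - A(G)`. -/
noncomputable def lapM {V : Type*} [Fintype V] [DecidableEq V]
    (G : SimpleGraph V) [DecidableRel G.Adj] : Matrix V V ℝ :=
  degM G - adjM G

/-- The matrix `B_α(G) = α A(G) + (1-α) L(G)`. -/
noncomputable def Balpha {V : Type*} [Fintype V] [DecidableEq V]
    (G : SimpleGraph V) [DecidableRel G.Adj] (α : ℝ) : Matrix V V ℝ :=
  α • adjM G + (1 - α) • lapM G

namespace Matrix

variable {n : Type*} [Fintype n] [DecidableEq n] {A : Matrix n n ℝ}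

theorem PosSemidef.sInf_spectrum_eq_zero_iff [Nonempty n] (hA : A.PosSemidef) :
    sInf (spectrum ℝ A) = 0 ↔ ∃ x ≠ 0, A *ᵥ x = 0 := by
  have hnonneg : ∀ μ ∈ spectrum ℝ A, 0 ≤ μ := fun μ hμ =>
    (posSemidef_iff_isHermitian_and_spectrum_nonneg.1 hA).2 hμ
  have hne : (spectrum ℝ A).Nonempty := by
    rw [hA.isHermitian.spectrum_real_eq_range_eigenvalues]
    exact Set.range_nonempty _
  have hzero : (0 : ℝ) ∈ spectrum ℝ A ↔ ∃ x ≠ 0, A *ᵥ x = 0 := by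
    rw [spectrum.zero_mem_iff, isUnit_iff_isUnit_det, isUnit_iff_ne_zero, not_not,
      exists_mulVec_eq_zero_iff]
  rw [← hzero]
  constructor
  · intro h
    exact h ▸ hne.csInf_mem A.finite_real_spectrum
  · intro h0
    exact le_antisymm (csInf_le ⟨0, hnonneg⟩ h0) (le_csInf hne hnonneg)

theorem IsHermitian.sInf_spectrum_neg {x : n → ℝ} (hA : A.IsHermitian)
    (hx : x ⬝ᵥ (A *ᵥ x) < 0) : sInf (spectrum ℝ A) < 0 := by
  by_contra! h
  have hpsd : A.PosSemidef := posSemidef_iff_isHermitian_and_spectrum_nonneg.2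
    ⟨hA, fun μ hμ => h.trans (csInf_le A.finite_real_spectrum.bddBelow hμ)⟩
  simpa using (hpsd.dotProduct_mulVec_nonneg x).trans_lt hx

end Matrix

namespace SimpleGraph

open Finset

theorem Preconnected.eq_of_forall_adj {V α : Type*} {G : SimpleGraph V} (hG : G.Preconnected)
    {f : V → α} (hf : ∀ i j, G.Adj i j → f i = f j) (i j : V) : f i = f j := by
  obtain ⟨p⟩ := hG i j
  induction p with
  | nil => rfl
  | cons hadj _ ih => exact (hf _ _ hadj).trans ih

variable {V : Type*} [Fintype V] [DecidableEq V] (R : Type*)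
  (G : SimpleGraph V) [DecidableRel G.Adj]

def signlessLapMatrix [AddMonoidWithOne R] : Matrix V V R := G.degMatrix R + G.adjMatrix R

theorem isHermitian_signlessLapMatrix [NonAssocSemiring R] [StarRing R] [TrivialStar R] :
    (G.signlessLapMatrix R).IsHermitian :=
  (G.isHermitian_degMatrix R).add (G.isHermitian_adjMatrix R)

theorem dotProduct_mulVec_signlessLapMatrix [Field R] [CharZero R] (x : V → R) :
    x ⬝ᵥ (G.signlessLapMatrix R *ᵥ x) =
    (∑ i : V, ∑ j : V, if G.Adj i j then (x i + x j) ^ 2 else 0) / 2 := by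
  simp_rw [signlessLapMatrix, Matrix.add_mulVec, dotProduct_add, dotProduct_mulVec_degMatrix,
    dotProduct_mulVec_adjMatrix, ← sum_add_distrib, degree_eq_sum_if_adj, sum_mul, ite_mul,
    one_mul, zero_mul, ← sum_add_distrib, ite_add_ite, add_zero]
  rw [← add_self_div_two (∑ x_1 : V, ∑ x_2 : V, _)]
  conv_lhs => enter [1, 2, 2, i, 2, j]; rw [if_congr (adj_comm G i j) rfl rfl]
  conv_lhs => enter [1, 2]; rw [Finset.sum_comm]
  simp_rw [← sum_add_distrib, ite_add_ite]
  congr 2 with i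
  congr 2 with j
  ring_nf

theorem posSemidef_signlessLapMatrix [Field R] [LinearOrder R] [IsStrictOrderedRing R]
    [StarRing R] [TrivialStar R] : (G.signlessLapMatrix R).PosSemidef := by
  refine .of_dotProduct_mulVec_nonneg (G.isHermitian_signlessLapMatrix R) fun x ↦ ?_
  rw [star_trivial, dotProduct_mulVec_signlessLapMatrix]
  positivity

theorem signlessLapMatrix_mulVec_eq_zero_iff_forall_adj {x : V → ℝ} :
    G.signlessLapMatrix ℝ *ᵥ x = 0 ↔ ∀ i j : V, G.Adj i j → x i = -x j := by
  rw [← (G.posSemidef_signlessLapMatrix ℝ).dotProduct_mulVec_zero_iff, star_trivial,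
    dotProduct_mulVec_signlessLapMatrix]
  simp (disch := intros; positivity) [sum_eq_zero_iff_of_nonneg, add_eq_zero_iff_eq_neg]

theorem colorable_two_iff_exists_signlessLapMatrix_mulVec_eq_zero (hG : G.Connected) :
    G.Colorable 2 ↔ ∃ x ≠ 0, G.signlessLapMatrix ℝ *ᵥ x = 0 := by
  simp_rw [signlessLapMatrix_mulVec_eq_zero_iff_forall_adj]
  constructor
  · rintro ⟨C⟩
    refine ⟨fun v ↦ if C v = 0 then 1 else -1, ?_, fun i j hij ↦ ?_⟩
    · obtain ⟨v⟩ := hG.nonempty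
      exact Function.ne_iff.2 ⟨v, by split_ifs <;> norm_num⟩
    · have hne := C.valid hij
      dsimp only
      revert hne
      generalize C i = a
      generalize C j = b
      fin_cases a <;> fin_cases b <;> simp
  · rintro ⟨x, hx, hadj⟩
    obtain ⟨v₀, hv₀⟩ := Function.ne_iff.1 hx
    have habs : ∀ v, |x v| = |x v₀| := fun v ↦
      hG.preconnected.eq_of_forall_adj (f := fun v ↦ |x v|)
        (fun i j hij ↦ by rw [hadj i j hij, abs_neg]) v v₀
    have hnz : ∀ v, x v ≠ 0 := fun v h ↦ hv₀ (abs_eq_zero.1 ((habs v).symm.trans (by simp [h])))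
    refine (Coloring.mk (fun v ↦ decide (0 < x v)) fun {i j} hij ↦ ?_).colorable
    rw [Ne, decide_eq_decide, hadj i j hij, neg_pos]
    rcases (hnz j).lt_or_gt with h | h <;> simp [h, h.le, not_lt.2]

end SimpleGraph

section Balpha

open SimpleGraph

variable {V : Type*} [Fintype V] [DecidableEq V] (G : SimpleGraph V) [DecidableRel G.Adj]

theorem Balpha_eq (α : ℝ) :
    Balpha G α = (α / 2) • G.signlessLapMatrix ℝ + ((2 - 3 * α) / 2) • G.lapMatrix ℝ := by
  simp only [Balpha, lapM, degM, adjM, signlessLapMatrix, lapMatrix, degMatrix]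
  module

theorem isHermitian_Balpha (α : ℝ) : (Balpha G α).IsHermitian := by
  rw [Balpha_eq]
  exact ((G.isHermitian_signlessLapMatrix ℝ).smul (.all _)).add
    ((G.isHermitian_lapMatrix ℝ).smul (.all _))

theorem dotProduct_mulVec_Balpha (α : ℝ) (x : V → ℝ) :
    x ⬝ᵥ (Balpha G α *ᵥ x) = α / 2 * (x ⬝ᵥ (G.signlessLapMatrix ℝ *ᵥ x)) +
      (2 - 3 * α) / 2 * (x ⬝ᵥ (G.lapMatrix ℝ *ᵥ x)) := by
  simp only [Balpha_eq, add_mulVec, smul_mulVec, dotProduct_add, dotProduct_smul, smul_eq_mul]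

theorem posSemidef_Balpha {α : ℝ} (h₀ : 0 ≤ α) (h₁ : α ≤ 2 / 3) : (Balpha G α).PosSemidef := by
  rw [Balpha_eq]
  exact ((G.posSemidef_signlessLapMatrix ℝ).smul (by linarith)).add
    ((posSemidef_lapMatrix ℝ G).smul (by linarith))

theorem Balpha_mulVec_eq_zero_iff {α : ℝ} (h₀ : 0 < α) (h₁ : α < 2 / 3) {x : V → ℝ} :
    Balpha G α *ᵥ x = 0 ↔ G.signlessLapMatrix ℝ *ᵥ x = 0 ∧ G.lapMatrix ℝ *ᵥ x = 0 := by
  have hQ := (G.posSemidef_signlessLapMatrix ℝ).dotProduct_mulVec_zero_iff x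
  have hL := (posSemidef_lapMatrix ℝ G).dotProduct_mulVec_zero_iff x
  have hQ₀ := (G.posSemidef_signlessLapMatrix ℝ).dotProduct_mulVec_nonneg x
  have hL₀ := (posSemidef_lapMatrix ℝ G).dotProduct_mulVec_nonneg x
  simp only [star_trivial] at hQ hL hQ₀ hL₀
  rw [← (posSemidef_Balpha G h₀.le h₁.le).dotProduct_mulVec_zero_iff, star_trivial,
    dotProduct_mulVec_Balpha, ← hQ, ← hL]
  constructor
  · intro h
    constructor <;> nlinarith
  · rintro ⟨hq, hl⟩
    rw [hq, hl]
    ring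

variable {G}

theorem eq_zero_of_signlessLapMatrix_mulVec_eq_zero_of_lapMatrix_mulVec_eq_zero
    (hG : G.Connected) {a b : V} (hab : G.Adj a b) {x : V → ℝ}
    (hQ : G.signlessLapMatrix ℝ *ᵥ x = 0) (hL : G.lapMatrix ℝ *ᵥ x = 0) : x = 0 := by
  have hconst := (lapMatrix_mulVec_eq_zero_iff_forall_reachable G).1 hL
  have hab' : x a = -x b := (G.signlessLapMatrix_mulVec_eq_zero_iff_forall_adj).1 hQ a b hab
  have ha : x a = 0 := by linarith [hconst a b (hG.preconnected a b)]
  funext v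
  exact (hconst v a (hG.preconnected v a)).trans ha

theorem sInf_spectrum_Balpha_ne_zero (hG : G.Connected) {a b : V} (hab : G.Adj a b) {α : ℝ}
    (h₀ : 0 < α) (h₁ : α < 2 / 3) : sInf (spectrum ℝ (Balpha G α)) ≠ 0 := by
  have := hG.nonempty
  rw [Ne, (posSemidef_Balpha G h₀.le h₁.le).sInf_spectrum_eq_zero_iff]
  rintro ⟨x, hx, hBx⟩
  obtain ⟨hQ, hL⟩ := (Balpha_mulVec_eq_zero_iff G h₀ h₁).1 hBx
  exact hx (eq_zero_of_signlessLapMatrix_mulVec_eq_zero_of_lapMatrix_mulVec_eq_zero hG hab hQ hL)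

theorem sInf_spectrum_Balpha_two_thirds_eq_zero_iff (hG : G.Connected) :
    sInf (spectrum ℝ (Balpha G (2 / 3))) = 0 ↔ G.Colorable 2 := by
  have := hG.nonempty
  have hB : Balpha G (2 / 3) = (1 / 3 : ℝ) • G.signlessLapMatrix ℝ := by
    rw [Balpha_eq]
    norm_num
  rw [(posSemidef_Balpha G (by norm_num) le_rfl).sInf_spectrum_eq_zero_iff,
    colorable_two_iff_exists_signlessLapMatrix_mulVec_eq_zero G hG, hB]
  simp only [smul_mulVec, smul_eq_zero, one_div, inv_eq_zero, OfNat.ofNat_ne_zero, false_or]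

theorem sInf_spectrum_Balpha_neg (hG : G.Connected) {a b : V} (hab : G.Adj a b)
    (hcol : G.Colorable 2) {α : ℝ} (hα : 2 / 3 < α) : sInf (spectrum ℝ (Balpha G α)) < 0 := by
  obtain ⟨x, hx, hQ⟩ := (colorable_two_iff_exists_signlessLapMatrix_mulVec_eq_zero G hG).1 hcol
  have hL : G.lapMatrix ℝ *ᵥ x ≠ 0 := fun hL ↦
    hx (eq_zero_of_signlessLapMatrix_mulVec_eq_zero_of_lapMatrix_mulVec_eq_zero hG hab hQ hL)
  have hLpos : 0 < x ⬝ᵥ (G.lapMatrix ℝ *ᵥ x) := by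
    have hpsd := posSemidef_lapMatrix ℝ G
    refine lt_of_le_of_ne (by simpa using hpsd.dotProduct_mulVec_nonneg x) fun h ↦ hL ?_
    exact (hpsd.dotProduct_mulVec_zero_iff x).1 (by simpa using h.symm)
  refine (isHermitian_Balpha G α).sInf_spectrum_neg (x := x) ?_
  rw [dotProduct_mulVec_Balpha, hQ, dotProduct_zero, mul_zero, zero_add]
  exact mul_neg_of_neg_of_pos (by linarith) hLpos

end Balpha

theorem stmt_17 {V : Type*} [Fintype V] [DecidableEq V]
    (G : SimpleGraph V) [DecidableRel G.Adj]
    (hconn : G.Connected) (hedge : ∃ e, e ∈ G.edgeSet) :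
    G.Colorable 2 ↔
      sSup {α : ℝ | α ∈ Set.Ioo (0:ℝ) 1 ∧
        sInf (spectrum ℝ (Balpha G α)) = 0} = 2/3 := by
  obtain ⟨a, b, hab⟩ := G.ne_bot_iff_exists_adj.1 (G.edgeSet_nonempty.1 hedge)
  set S := {α : ℝ | α ∈ Set.Ioo (0:ℝ) 1 ∧ sInf (spectrum ℝ (Balpha G α)) = 0}
  have hS_ge : ∀ α ∈ S, 2 / 3 ≤ α := fun α ⟨⟨h₀, _⟩, h⟩ ↦
    not_lt.1 fun h₁ ↦ sInf_spectrum_Balpha_ne_zero hconn hab h₀ h₁ h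
  have hS_bdd : BddAbove S := ⟨1, fun α hα ↦ hα.1.2.le⟩
  constructor
  · intro hcol
    have hS : S = {2 / 3} := by
      refine Set.eq_singleton_iff_unique_mem.2 ⟨⟨by norm_num,
        (sInf_spectrum_Balpha_two_thirds_eq_zero_iff hconn).2 hcol⟩, fun α hα ↦ ?_⟩
      refine le_antisymm (not_lt.1 fun h ↦ ?_) (hS_ge α hα)
      exact (sInf_spectrum_Balpha_neg hconn hab hcol h).ne hα.2
    rw [hS, csSup_singleton]
  · intro hsup
    by_contra hcol
    have hS_gt : ∀ α ∈ S, 2 / 3 < α := fun α hα ↦ (hS_ge α hα).lt_of_ne fun h ↦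
      hcol ((sInf_spectrum_Balpha_two_thirds_eq_zero_iff hconn).1 (h ▸ hα.2))
    rcases S.eq_empty_or_nonempty with hS | ⟨α, hα⟩
    · rw [hS, Real.sSup_empty] at hsup
      norm_num at hsup
    · exact (hS_gt α hα).not_ge (hsup ▸ le_csSup hS_bdd hα)
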